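/- Let Z be a standard Gaussian vector on ℝ^q, h > 0, κ ∈ ℝ, ζ ∈ ℝ^d, x ∈ ℝ^d, and let f : ℝ^d → ℝ be convex with at most linear growth. For A ∈ M_{d,q}(ℝ) set P_A(f)(x) := E f(x + hκ(x − ζ) + √h · A Z). Then the map A ↦ P_A(f)(x) is nondecreasing for the preorder ⪯: for all A, B ∈ M_{d,q}(ℝ), if B Bᵀ − A Aᵀ is positive semi-definite then P_A(f)(x) ≤ P_B(f)(x). -/

import Mathlib

open MeasureTheory ProbabilityTheory Matrix
open scoped ENNReal NNReal InnerProductSpace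

lemma gaussPi_eq (ι : Type*) [Fintype ι] :
    Measure.pi (fun _ : ι => gaussianReal 0 1)
      = (volume : Measure (ι → ℝ)).withDensity
          (fun v => ENNReal.ofReal (∏ i, gaussianPDFReal 0 1 (v i))) := by
  refine Measure.pi_eq (fun s hs => ?_)
  have hbox : MeasurableSet (Set.pi Set.univ s) := MeasurableSet.univ_pi hs
  set h : ι → ℝ → ℝ := fun i => (s i).indicator (gaussianPDFReal 0 1) with hh
  have hind : ∀ v : ι → ℝ,
      (Set.pi Set.univ s).indicator (fun v => ∏ i, gaussianPDFReal 0 1 (v i)) v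
        = ∏ i, h i (v i) := by
    intro v
    by_cases hv : v ∈ Set.pi Set.univ s
    · rw [Set.indicator_of_mem hv]
      refine Finset.prod_congr rfl (fun i _ => ?_)
      rw [hh]; simp [Set.indicator_of_mem (hv i (Set.mem_univ i))]
    · rw [Set.indicator_of_notMem hv]
      rw [Set.mem_univ_pi] at hv
      push_neg at hv
      obtain ⟨i, hi⟩ := hv
      exact (Finset.prod_eq_zero (Finset.mem_univ i) (by simp [hh, Set.indicator_of_notMem hi])).symm
  have hint : ∀ i, Integrable (h i) := fun i =>
    (integrable_gaussianPDFReal 0 1).indicator (hs i)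
  have hprod : Integrable (fun v : ι → ℝ => ∏ i, h i (v i)) :=
    Integrable.fintype_prod (f := h) hint
  have hnn : 0 ≤ᵐ[volume] (fun v : ι → ℝ => ∏ i, h i (v i)) := by
    refine Filter.Eventually.of_forall (fun v => Finset.prod_nonneg fun i _ => ?_)
    exact Set.indicator_nonneg (fun x _ => gaussianPDFReal_nonneg 0 1 x) _
  calc (volume : Measure (ι → ℝ)).withDensity
          (fun v => ENNReal.ofReal (∏ i, gaussianPDFReal 0 1 (v i))) (Set.pi Set.univ s)
      = ∫⁻ v in Set.pi Set.univ s, ENNReal.ofReal (∏ i, gaussianPDFReal 0 1 (v i)) := by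
        rw [withDensity_apply _ hbox]
    _ = ∫⁻ v, (Set.pi Set.univ s).indicator
          (fun v => ENNReal.ofReal (∏ i, gaussianPDFReal 0 1 (v i))) v := by
        rw [lintegral_indicator hbox]
    _ = ∫⁻ (v : ι → ℝ), ENNReal.ofReal (∏ i, h i (v i)) := by
        refine lintegral_congr (fun v => ?_)
        classical
        rw [← hind v, Set.indicator_apply, Set.indicator_apply]
        split <;> simp
    _ = ENNReal.ofReal (∫ (v : ι → ℝ), ∏ i, h i (v i)) :=
        (ofReal_integral_eq_lintegral_ofReal hprod hnn).symm
    _ = ENNReal.ofReal (∏ i, ∫ x, h i x) := by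
        rw [volume_pi, integral_fintype_prod_eq_prod (𝕜 := ℝ) h]
    _ = ∏ i, ENNReal.ofReal (∫ x, h i x) := by
        refine ENNReal.ofReal_prod_of_nonneg (fun i _ => ?_)
        exact integral_nonneg (fun x => Set.indicator_nonneg (fun x _ => gaussianPDFReal_nonneg 0 1 x) _)
    _ = ∏ i, gaussianReal 0 1 (s i) := by
        refine Finset.prod_congr rfl (fun i _ => ?_)
        rw [hh, integral_indicator (hs i),
          ← gaussianReal_apply_eq_integral 0 one_ne_zero (s i)]


lemma prod_pdf_eq {ι : Type*} [Fintype ι] {v w : ι → ℝ}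
    (h : ∑ i, v i * v i = ∑ i, w i * w i) :
    ∏ i, gaussianPDFReal 0 1 (v i) = ∏ i, gaussianPDFReal 0 1 (w i) := by
  simp only [gaussianPDFReal_def]
  rw [Finset.prod_mul_distrib, Finset.prod_mul_distrib, ← Real.exp_sum, ← Real.exp_sum]
  congr 2
  have e : ∀ u : ι → ℝ, ∑ i, -(u i - 0)^2/(2*((1:ℝ≥0):ℝ)) = (-1/2) * ∑ i, u i * u i := by
    intro u; rw [Finset.mul_sum]; refine Finset.sum_congr rfl fun i _ => by push_cast; ring
  rw [e, e, h]

lemma rot_inv {ι : Type*} [Fintype ι] [DecidableEq ι] (U : Matrix ι ι ℝ) (hU : U * Uᵀ = 1) :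
    Measure.map U.mulVec (Measure.pi (fun _ : ι => gaussianReal 0 1))
      = Measure.pi (fun _ : ι => gaussianReal 0 1) := by
  classical
  have hUtU : Uᵀ * U = 1 := mul_eq_one_comm.mp hU
  have hdet2 : U.det * U.det = 1 := by
    have := congrArg Matrix.det hU
    rwa [Matrix.det_mul, Matrix.det_transpose, Matrix.det_one] at this
  have hdet : U.det ≠ 0 := fun h => by simp [h] at hdet2
  have habs : |U.det⁻¹| = 1 := by
    rcases mul_self_eq_one_iff.mp hdet2 with h | h <;> rw [h] <;> norm_num
  have hUc : Measurable U.mulVec := by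
    have : Continuous (Matrix.toLin' U) := LinearMap.continuous_of_finiteDimensional _
    have he : ⇑(Matrix.toLin' U) = U.mulVec := funext fun v => Matrix.toLin'_apply U v
    exact (he ▸ this).measurable
  have hmapvol : Measure.map U.mulVec (volume : Measure (ι → ℝ)) = volume := by
    have := Real.map_matrix_volume_pi_eq_smul_volume_pi hdet
    have he : ⇑(Matrix.toLin' U) = U.mulVec := funext fun v => Matrix.toLin'_apply U v
    rw [he] at this
    rw [this, habs, ENNReal.ofReal_one, one_smul]
  have hnorm : ∀ v : ι → ℝ, ∑ i, U.mulVec v i * U.mulVec v i = ∑ i, v i * v i := by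
    intro v
    have h1 : U.mulVec v ⬝ᵥ U.mulVec v = v ⬝ᵥ v := by
      rw [Matrix.dotProduct_mulVec]
      have : Matrix.vecMul (U.mulVec v) U = Uᵀ.mulVec (U.mulVec v) := by
        rw [Matrix.mulVec_transpose]
      rw [this, Matrix.mulVec_mulVec, hUtU, Matrix.one_mulVec]
    simpa [dotProduct] using h1
  set ρ : (ι → ℝ) → ℝ≥0∞ := fun v => ENNReal.ofReal (∏ i, gaussianPDFReal 0 1 (v i)) with hρdef
  have hρmeas : Measurable ρ := by
    apply Measurable.ennreal_ofReal
    exact Finset.measurable_prod _ fun i _ =>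
      (measurable_gaussianPDFReal 0 1).comp (measurable_pi_apply i)
  have hρU : ∀ v, ρ (U.mulVec v) = ρ v := fun v => by
    rw [hρdef]; exact congrArg _ (prod_pdf_eq (hnorm v))
  refine Measure.ext (fun t ht => ?_)
  rw [Measure.map_apply hUc ht, gaussPi_eq, withDensity_apply _ (hUc ht),
    withDensity_apply _ ht, ← lintegral_indicator (hUc ht), ← lintegral_indicator ht]
  have hind : ∀ v, (U.mulVec ⁻¹' t).indicator ρ v = t.indicator ρ (U.mulVec v) := by
    intro v
    by_cases hv : U.mulVec v ∈ t
    · rw [Set.indicator_of_mem hv, Set.indicator_of_mem (by exact hv), hρU]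
    · rw [Set.indicator_of_notMem hv, Set.indicator_of_notMem (by exact hv)]
  calc ∫⁻ v, (U.mulVec ⁻¹' t).indicator ρ v = ∫⁻ v, t.indicator ρ (U.mulVec v) :=
        lintegral_congr hind
    _ = ∫⁻ w, t.indicator ρ w ∂(Measure.map U.mulVec volume) :=
        (lintegral_map (hρmeas.indicator ht) hUc).symm
    _ = ∫⁻ w, t.indicator ρ w := by rw [hmapvol]

lemma exists_orthogonal {d : ℕ} {ι : Type*} [Fintype ι] [DecidableEq ι]
    (M₁ M₂ : Matrix (Fin d) ι ℝ) (h : M₁ * M₁ᵀ = M₂ * M₂ᵀ) :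
    ∃ U : Matrix ι ι ℝ, U * Uᵀ = 1 ∧ M₁ = M₂ * U := by
  classical
  have dotl : ∀ (M : Matrix (Fin d) ι ℝ) (x y : Fin d → ℝ),
      Mᵀ.mulVec x ⬝ᵥ Mᵀ.mulVec y = x ⬝ᵥ (M * Mᵀ).mulVec y := by
    intro M x y
    rw [← Matrix.mulVec_mulVec, Matrix.dotProduct_mulVec x, Matrix.mulVec_transpose,
      Matrix.mulVec_transpose]
  set T₁ : EuclideanSpace ℝ (Fin d) →ₗ[ℝ] EuclideanSpace ℝ ι := Matrix.toEuclideanLin M₁ᵀ with hT₁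
  set T₂ : EuclideanSpace ℝ (Fin d) →ₗ[ℝ] EuclideanSpace ℝ ι := Matrix.toEuclideanLin M₂ᵀ with hT₂
  have einner : ∀ (M : Matrix (Fin d) ι ℝ) (x y : EuclideanSpace ℝ (Fin d)),
      ⟪Matrix.toEuclideanLin Mᵀ x, Matrix.toEuclideanLin Mᵀ y⟫_ℝ
        = (WithLp.equiv 2 (Fin d → ℝ) x) ⬝ᵥ ((M * Mᵀ).mulVec (WithLp.equiv 2 (Fin d → ℝ) y)) := by
    intro M x y
    rw [← dotl]
    simp [Matrix.toEuclideanLin_apply, PiLp.inner_apply, RCLike.inner_apply, dotProduct, mul_comm]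
  have hinner : ∀ x y : EuclideanSpace ℝ (Fin d), ⟪T₂ x, T₂ y⟫_ℝ = ⟪T₁ x, T₁ y⟫_ℝ := by
    intro x y
    rw [hT₁, hT₂, einner, einner, h]
  have hnormeq : ∀ x, ‖T₁ x‖ = ‖T₂ x‖ := by
    intro x
    rw [norm_eq_sqrt_real_inner, norm_eq_sqrt_real_inner (T₂ x), hinner x x]
  have hker : LinearMap.ker T₂ ≤ LinearMap.ker T₁ := by
    intro x hx
    rw [LinearMap.mem_ker] at hx ⊢
    have h9 := hnormeq x
    rw [hx, norm_zero] at h9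
    exact norm_eq_zero.mp h9
  set e₂ := LinearMap.quotKerEquivRange T₂ with he₂
  set L₀ : LinearMap.range T₂ →ₗ[ℝ] EuclideanSpace ℝ ι :=
    ((LinearMap.ker T₂).liftQ T₁ hker).comp e₂.symm.toLinearMap with hL₀
  have hkey : ∀ x : EuclideanSpace ℝ (Fin d),
      L₀ ⟨T₂ x, LinearMap.mem_range_self _ x⟩ = T₁ x := by
    intro x
    have h2 : e₂ (Submodule.Quotient.mk x) = ⟨T₂ x, LinearMap.mem_range_self _ x⟩ :=
      Subtype.ext (LinearMap.quotKerEquivRange_apply_mk T₂ x)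
    rw [hL₀, LinearMap.comp_apply, ← h2]
    simp
  have hLnorm : ∀ s : LinearMap.range T₂, ‖L₀ s‖ = ‖s‖ := by
    rintro ⟨v, x, rfl⟩
    rw [hkey x]
    rw [hnormeq x]
    rfl
  set L : LinearMap.range T₂ →ₗᵢ[ℝ] EuclideanSpace ℝ ι := ⟨L₀, hLnorm⟩ with hL
  set V := L.extend with hVdef
  have hV : ∀ x : EuclideanSpace ℝ (Fin d), V (T₂ x) = T₁ x := by
    intro x
    have h3 := LinearIsometry.extend_apply L ⟨T₂ x, LinearMap.mem_range_self _ x⟩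
    rw [hVdef]
    rw [show ((⟨T₂ x, LinearMap.mem_range_self _ x⟩ : LinearMap.range T₂) : EuclideanSpace ℝ ι)
      = T₂ x from rfl] at h3
    rw [h3, hL]
    exact hkey x
  set N : Matrix ι ι ℝ := Matrix.toEuclideanLin.symm V.toLinearMap with hNdef
  have hN : ∀ v : EuclideanSpace ℝ ι, Matrix.toEuclideanLin N v = V v := by
    intro v
    rw [hNdef, LinearEquiv.apply_symm_apply]
    rfl
  have hmv : ∀ x : Fin d → ℝ, N.mulVec (M₂ᵀ.mulVec x) = M₁ᵀ.mulVec x := by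
    intro x
    have e2 : T₂ ((WithLp.equiv 2 (Fin d → ℝ)).symm x)
        = (WithLp.equiv 2 (ι → ℝ)).symm (M₂ᵀ.mulVec x) :=
      Matrix.toEuclideanLin_apply_piLp_toLp M₂ᵀ x
    have e1 : T₁ ((WithLp.equiv 2 (Fin d → ℝ)).symm x)
        = (WithLp.equiv 2 (ι → ℝ)).symm (M₁ᵀ.mulVec x) :=
      Matrix.toEuclideanLin_apply_piLp_toLp M₁ᵀ x
    have e3 : Matrix.toEuclideanLin N ((WithLp.equiv 2 (ι → ℝ)).symm (M₂ᵀ.mulVec x))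
        = (WithLp.equiv 2 (ι → ℝ)).symm (N.mulVec (M₂ᵀ.mulVec x)) :=
      Matrix.toEuclideanLin_apply_piLp_toLp N _
    have h4 : (WithLp.equiv 2 (ι → ℝ)).symm (N.mulVec (M₂ᵀ.mulVec x))
        = (WithLp.equiv 2 (ι → ℝ)).symm (M₁ᵀ.mulVec x) := by
      rw [← e3, ← e2, hN, hV, e1]
    exact (WithLp.equiv 2 (ι → ℝ)).symm.injective h4
  have hNM : N * M₂ᵀ = M₁ᵀ := by
    have h5 : Matrix.toLin' (N * M₂ᵀ) = Matrix.toLin' M₁ᵀ := by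
      apply LinearMap.ext; intro x
      rw [Matrix.toLin'_apply, Matrix.toLin'_apply, ← Matrix.mulVec_mulVec]
      exact hmv x
    exact Matrix.toLin'.injective h5
  have hVi : ∀ i : ι, V (EuclideanSpace.single i (1:ℝ))
      = (WithLp.equiv 2 (ι → ℝ)).symm (fun k => N k i) := by
    intro i
    have h6 : EuclideanSpace.single i (1:ℝ) = (WithLp.equiv 2 (ι → ℝ)).symm (Pi.single i 1) := rfl
    rw [h6, ← hN, WithLp.equiv_symm_apply, Matrix.toEuclideanLin_apply_piLp_toLp]
    congr 1
    funext k
    simp [Matrix.mulVec_single]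
  have hNO : Nᵀ * N = 1 := by
    ext i j
    have h5 := V.inner_map_map (EuclideanSpace.single i (1:ℝ)) (EuclideanSpace.single j (1:ℝ))
    rw [hVi i, hVi j] at h5
    simp only [PiLp.inner_apply, RCLike.inner_apply, WithLp.equiv_symm_apply, WithLp.ofLp_toLp,
      EuclideanSpace.single_apply, starRingEnd_apply, star_trivial] at h5
    simp only [Matrix.mul_apply, Matrix.transpose_apply, Matrix.one_apply]
    rw [show (∑ x, N x i * N x j) = ∑ x, N x j * N x i from
      Finset.sum_congr rfl fun x _ => mul_comm _ _, h5]
    simp [Finset.sum_ite_eq, eq_comm]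
  refine ⟨Nᵀ, ?_, ?_⟩
  · rw [Matrix.transpose_transpose]; exact hNO
  · have := congrArg Matrix.transpose hNM
    rw [Matrix.transpose_mul, Matrix.transpose_transpose, Matrix.transpose_transpose] at this
    exact this.symm

lemma integrable_id_gaussian : Integrable (fun x : ℝ => x) (gaussianReal 0 1) := by
  rw [gaussianReal_of_var_ne_zero 0 one_ne_zero]
  rw [integrable_withDensity_iff (measurable_gaussianPDF 0 1)
    (Filter.Eventually.of_forall fun x => ENNReal.ofReal_lt_top)]
  have hbase : Integrable (fun x : ℝ => x * Real.exp (-(2⁻¹ : ℝ) * x ^ 2)) := by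
    have := integrable_rpow_mul_exp_neg_mul_sq (b := (2⁻¹ : ℝ)) (by norm_num) (s := 1) (by norm_num)
    simpa [Real.rpow_one] using this
  have heq : (fun x : ℝ => x * ((gaussianPDF 0 1 x).toReal))
      = fun x : ℝ => (Real.sqrt (2 * Real.pi))⁻¹ * (x * Real.exp (-(2⁻¹ : ℝ) * x ^ 2)) := by
    funext x
    rw [gaussianPDF_def, ENNReal.toReal_ofReal (gaussianPDFReal_nonneg 0 1 x),
      gaussianPDFReal_def]
    push_cast
    ring_nf
  rw [heq]
  exact hbase.const_mul _

lemma integral_id_gaussian : ∫ x, x ∂(gaussianReal 0 1) = 0 := by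
  have hmap : (gaussianReal 0 1).map (fun x => (-1 : ℝ) * x) = gaussianReal 0 1 := by
    have := gaussianReal_map_const_mul (μ := 0) (v := 1) (-1 : ℝ)
    simpa using this
  have h1 : ∫ x, x ∂(gaussianReal 0 1) = ∫ x, (-1 : ℝ) * x ∂(gaussianReal 0 1) := by
    calc ∫ x, x ∂(gaussianReal 0 1)
        = ∫ x, x ∂((gaussianReal 0 1).map (fun x => (-1 : ℝ) * x)) := by rw [hmap]
      _ = ∫ x, (-1 : ℝ) * x ∂(gaussianReal 0 1) :=
          integral_map (by fun_prop) aestronglyMeasurable_id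
  rw [integral_const_mul] at h1
  linarith

lemma map_eval_gaussPi {ι : Type*} [Fintype ι] [DecidableEq ι] (i : ι) :
    Measure.map (fun v : ι → ℝ => v i) (Measure.pi fun _ : ι => gaussianReal 0 1)
      = gaussianReal 0 1 := by
  refine Measure.ext fun s hs => ?_
  rw [Measure.map_apply (measurable_pi_apply i) hs]
  have hpre : (fun v : ι → ℝ => v i) ⁻¹' s
      = Set.pi Set.univ (Function.update (fun _ : ι => (Set.univ : Set ℝ)) i s) := by
    ext v
    simp only [Set.mem_preimage, Set.mem_univ_pi, Function.update_apply]
    constructor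
    · intro hv j
      by_cases hj : j = i
      · subst hj; simpa using hv
      · simp [hj]
    · intro hv
      have := hv i; simpa using this
  rw [hpre, Measure.pi_pi]
  rw [Finset.prod_eq_single i (fun j _ hj => by simp [Function.update_apply, hj])
    (fun hi => absurd (Finset.mem_univ i) hi)]
  simp

lemma integrable_comp_coord {ι : Type*} [Fintype ι] [DecidableEq ι] (i : ι)
    {g : ℝ → ℝ} (hg : Integrable g (gaussianReal 0 1)) :
    Integrable (fun v : ι → ℝ => g (v i)) (Measure.pi fun _ : ι => gaussianReal 0 1) := by
  have h2 : Integrable g (Measure.map (fun v : ι → ℝ => v i)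
      (Measure.pi fun _ : ι => gaussianReal 0 1)) := by
    rw [map_eval_gaussPi]; exact hg
  exact (integrable_map_measure h2.1 (measurable_pi_apply i).aemeasurable).mp h2

lemma integrable_coord {ι : Type*} [Fintype ι] [DecidableEq ι] (i : ι) :
    Integrable (fun v : ι → ℝ => |v i|) (Measure.pi fun _ : ι => gaussianReal 0 1) :=
  integrable_comp_coord i integrable_id_gaussian.abs

lemma integrable_id_pi {ι : Type*} [Fintype ι] [DecidableEq ι] :
    Integrable (fun v : ι → ℝ => v) (Measure.pi fun _ : ι => gaussianReal 0 1) := by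
  have hgi : Integrable (fun v : ι → ℝ => ∑ j, |v j|)
      (Measure.pi fun _ : ι => gaussianReal 0 1) :=
    integrable_finset_sum _ fun j _ => integrable_coord j
  refine hgi.mono (measurable_id.aestronglyMeasurable) (Filter.Eventually.of_forall fun v => ?_)
  have h1 : ‖v‖ ≤ ∑ j, |v j| := by
    refine pi_norm_le_iff_of_nonneg (Finset.sum_nonneg fun j _ => abs_nonneg _) |>.mpr fun i => ?_
    exact Finset.single_le_sum (f := fun j => |v j|) (fun j _ => abs_nonneg _) (Finset.mem_univ i)
  exact h1.trans (le_abs_self _)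

lemma integral_id_gaussPi {ι : Type*} [Fintype ι] [DecidableEq ι] :
    ∫ w, w ∂(Measure.pi fun _ : ι => gaussianReal 0 1) = 0 := by
  funext j
  have h1 := ContinuousLinearMap.integral_comp_comm (ContinuousLinearMap.proj (R := ℝ) j)
    (integrable_id_pi (ι := ι))
  have h2 : ∫ x, x ∂(gaussianReal 0 1)
      = ∫ w : ι → ℝ, w j ∂(Measure.pi fun _ : ι => gaussianReal 0 1) := by
    conv_lhs => rw [← map_eval_gaussPi (ι := ι) j]
    exact integral_map (measurable_pi_apply j).aemeasurable aestronglyMeasurable_id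
  have h3 : (∫ w, w ∂(Measure.pi fun _ : ι => gaussianReal 0 1)) j
      = ∫ w : ι → ℝ, w j ∂(Measure.pi fun _ : ι => gaussianReal 0 1) := by
    exact h1.symm
  rw [h3, ← h2, integral_id_gaussian]
  rfl

lemma continuous_mulVec' {m : Type*} {ι : Type*} [Fintype ι] [DecidableEq ι] [Fintype m]
    (M : Matrix m ι ℝ) : Continuous (M.mulVec) := by
  have h : Continuous (Matrix.toLin' M) := LinearMap.continuous_of_finiteDimensional _
  have he : ⇑(Matrix.toLin' M) = M.mulVec := funext fun v => Matrix.toLin'_apply M v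
  exact he ▸ h

lemma integrable_growth {d : ℕ} {ι : Type*} [Fintype ι] [DecidableEq ι]
    {f : (Fin d → ℝ) → ℝ} (hfc : Continuous f) {C : ℝ}
    (hgrowth : ∀ y, |f y| ≤ C * (1 + ‖y‖)) (c : Fin d → ℝ) (M : Matrix (Fin d) ι ℝ) :
    Integrable (fun v : ι → ℝ => f (c + M.mulVec v))
      (Measure.pi fun _ : ι => gaussianReal 0 1) := by
  have hC : 0 ≤ C := le_trans (abs_nonneg (f 0)) (by simpa using hgrowth 0)
  have hcont : Continuous fun v : ι → ℝ => c + M.mulVec v :=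
    continuous_const.add (continuous_mulVec' M)
  set g : (ι → ℝ) → ℝ :=
    fun v => C * (1 + ‖c‖) + ∑ j, (C * ‖(fun i => M i j)‖) * |v j| with hg
  have hgi : Integrable g (Measure.pi fun _ : ι => gaussianReal 0 1) :=
    (integrable_const _).add (integrable_finset_sum _ fun j _ => (integrable_coord j).const_mul _)
  refine hgi.mono ((hfc.comp hcont).aestronglyMeasurable)
    (Filter.Eventually.of_forall fun v => ?_)
  have hb : ‖M.mulVec v‖ ≤ ∑ j, ‖(fun i => M i j)‖ * |v j| := by
    have hrep : M.mulVec v = ∑ j, v j • (fun i => M i j) := by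
      funext i
      simp [Matrix.mulVec, dotProduct, Finset.sum_apply, mul_comm]
    rw [hrep]
    refine (norm_sum_le _ _).trans (Finset.sum_le_sum fun j _ => ?_)
    rw [norm_smul, Real.norm_eq_abs, mul_comm]
  calc ‖f (c + M.mulVec v)‖ ≤ C * (1 + ‖c + M.mulVec v‖) := by
        rw [Real.norm_eq_abs]; exact hgrowth _
    _ ≤ C * (1 + (‖c‖ + ‖M.mulVec v‖)) := by
        refine mul_le_mul_of_nonneg_left ?_ hC
        have := norm_add_le c (M.mulVec v); linarith
    _ = C * (1 + ‖c‖) + C * ‖M.mulVec v‖ := by ring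
    _ ≤ C * (1 + ‖c‖) + C * (∑ j, ‖(fun i => M i j)‖ * |v j|) :=
        add_le_add_right (mul_le_mul_of_nonneg_left hb hC) _
    _ = g v := by rw [hg]; simp only [Finset.mul_sum]; ring_nf
    _ ≤ ‖g v‖ := le_abs_self _

lemma integral_affine {d : ℕ} {ι : Type*} [Fintype ι] [DecidableEq ι]
    (c : Fin d → ℝ) (M : Matrix (Fin d) ι ℝ) :
    ∫ w, (c + M.mulVec w) ∂(Measure.pi fun _ : ι => gaussianReal 0 1) = c := by
  set L : (ι → ℝ) →L[ℝ] (Fin d → ℝ) := LinearMap.toContinuousLinearMap (Matrix.toLin' M) with hLdef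
  have hLw : ∀ w, L w = M.mulVec w := fun w => Matrix.toLin'_apply M w
  have hMi : Integrable (fun w : ι → ℝ => M.mulVec w)
      (Measure.pi fun _ : ι => gaussianReal 0 1) := by
    have := L.integrable_comp (integrable_id_pi (ι := ι))
    simpa [hLw] using this
  rw [integral_add (integrable_const c) hMi, integral_const, probReal_univ]
  have h2 : ∫ w, M.mulVec w ∂(Measure.pi fun _ : ι => gaussianReal 0 1)
      = L (∫ w, w ∂(Measure.pi fun _ : ι => gaussianReal 0 1)) := by
    rw [← L.integral_comp_comm (integrable_id_pi (ι := ι))]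
    simp [hLw]
  rw [h2, integral_id_gaussPi, map_zero, add_zero]
  simp

lemma map_mulVec_eq {d : ℕ} {ι : Type*} [Fintype ι] [DecidableEq ι]
    (M₁ M₂ : Matrix (Fin d) ι ℝ) (h : M₁ * M₁ᵀ = M₂ * M₂ᵀ) :
    Measure.map M₁.mulVec (Measure.pi fun _ : ι => gaussianReal 0 1)
      = Measure.map M₂.mulVec (Measure.pi fun _ : ι => gaussianReal 0 1) := by
  obtain ⟨U, hU, hM⟩ := exists_orthogonal M₁ M₂ h
  have hcomp : M₁.mulVec = M₂.mulVec ∘ U.mulVec := by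
    funext v
    rw [hM]
    simp [Function.comp, Matrix.mulVec_mulVec]
  rw [hcomp, ← Measure.map_map (continuous_mulVec' M₂).measurable
    (continuous_mulVec' U).measurable, rot_inv U hU]

/-- **`⪯`-monotonicity of the Euler transition in the (constant) volatility matrix.**
For `Z` standard Gaussian on `ℝ^q`, a convex `f` with at most linear growth and
`P_A(f)(x) := E f(x + hκ(x−ζ) + √h A Z)`, if `B Bᵀ − A Aᵀ` is positive semi-definite then
`P_A(f)(x) ≤ P_B(f)(x)`. -/
theorem eulerStep_mono_matrix {d q : ℕ} {Ω : Type*} [MeasurableSpace Ω]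
    (P : Measure Ω) [IsProbabilityMeasure P]
    (Z : Ω → Fin q → ℝ) (hZmeas : Measurable Z)
    (hZ : Measure.map Z P = Measure.pi fun _ => gaussianReal 0 1)
    (h κ : ℝ) (hh : 0 < h) (ζ : Fin d → ℝ) (x : Fin d → ℝ)
    (f : (Fin d → ℝ) → ℝ) (hf : ConvexOn ℝ Set.univ f)
    (C : ℝ) (hgrowth : ∀ y, |f y| ≤ C * (1 + ‖y‖))
    (A B : Matrix (Fin d) (Fin q) ℝ)
    (hAB : (B * Bᵀ - A * Aᵀ).PosSemidef) :
    ∫ ω, f (x + (h * κ) • (x - ζ) + Real.sqrt h • A.mulVec (Z ω)) ∂P ≤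
      ∫ ω, f (x + (h * κ) • (x - ζ) + Real.sqrt h • B.mulVec (Z ω)) ∂P := by
  classical
  have hfc : Continuous f :=
    continuousOn_univ.mp (hf.continuousOn isOpen_univ)
  set γq : Measure (Fin q → ℝ) := Measure.pi fun _ => gaussianReal 0 1 with hγq
  set γd : Measure (Fin d → ℝ) := Measure.pi fun _ => gaussianReal 0 1 with hγd
  set gS : Measure (Fin q ⊕ Fin d → ℝ) := Measure.pi fun _ => gaussianReal 0 1 with hgS
  set s : ℝ := Real.sqrt h with hs
  set c : Fin d → ℝ := x + (h * κ) • (x - ζ) with hc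
  set A₁ : Matrix (Fin d) (Fin q) ℝ := s • A with hA₁
  set B₁ : Matrix (Fin d) (Fin q) ℝ := s • B with hB₁
  -- rewrite the goal using scaled matrices
  have hgoal : ∀ M : Matrix (Fin d) (Fin q) ℝ,
      (fun ω => f (x + (h * κ) • (x - ζ) + s • M.mulVec (Z ω)))
        = fun ω => f (c + (s • M).mulVec (Z ω)) := by
    intro M
    funext ω
    rw [Matrix.smul_mulVec, hc]
  -- transfer to γq
  have hZint : ∀ M : Matrix (Fin d) (Fin q) ℝ,
      ∫ ω, f (c + M.mulVec (Z ω)) ∂P = ∫ z, f (c + M.mulVec z) ∂γq := by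
    intro M
    have hm : AEStronglyMeasurable (fun z : Fin q → ℝ => f (c + M.mulVec z))
        (Measure.map Z P) :=
      ((hfc.comp (continuous_const.add (continuous_mulVec' M))).aestronglyMeasurable)
    rw [← hZ, integral_map hZmeas.aemeasurable hm]
  -- positive semidefiniteness of the scaled difference
  have hD : B₁ * B₁ᵀ - A₁ * A₁ᵀ = (s * s) • (B * Bᵀ - A * Aᵀ) := by
    rw [hA₁, hB₁, Matrix.transpose_smul, Matrix.transpose_smul, Matrix.smul_mul,
      Matrix.smul_mul, Matrix.mul_smul, Matrix.mul_smul, smul_smul, smul_smul, smul_sub]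
  have hss : 0 ≤ s * s := mul_self_nonneg s
  have hDpsd : (B₁ * B₁ᵀ - A₁ * A₁ᵀ).PosSemidef := by
    rw [hD]
    refine ⟨?_, fun v => ?_⟩
    · have h1 := hAB.1
      rw [Matrix.IsHermitian] at h1 ⊢
      rw [Matrix.conjTranspose_smul, h1]
      congr 1
    · exact (hAB.smul hss).2 v
  obtain ⟨Cm, hCC⟩ : ∃ Cm : Matrix (Fin d) (Fin d) ℝ,
      Cm * Cmᵀ = B₁ * B₁ᵀ - A₁ * A₁ᵀ := by
    open scoped MatrixOrder in
    obtain ⟨X, hX, -, hXX⟩ := CFC.exists_sqrt_of_isSelfAdjoint_of_quasispectrumRestricts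
      hDpsd.isHermitian (QuasispectrumRestricts.nnreal_of_nonneg hDpsd.nonneg)
    refine ⟨X, ?_⟩
    have h1 : Xᵀ = X := by
      have h2 := hX.star_eq
      rw [Matrix.star_eq_conjTranspose, Matrix.conjTranspose_eq_transpose_of_trivial] at h2
      exact h2
    rw [h1]; exact hXX
  set M₁ : Matrix (Fin d) (Fin q ⊕ Fin d) ℝ := Matrix.fromCols A₁ Cm with hM₁
  set M₂ : Matrix (Fin d) (Fin q ⊕ Fin d) ℝ := Matrix.fromCols B₁ 0 with hM₂
  have hM1M2 : M₁ * M₁ᵀ = M₂ * M₂ᵀ := by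
    rw [hM₁, hM₂, Matrix.transpose_fromCols, Matrix.transpose_fromCols,
      Matrix.fromCols_mul_fromRows, Matrix.fromCols_mul_fromRows, hCC]
    simp
  -- measure preserving equivalence between the product and the sum-indexed pi measure
  set e := MeasurableEquiv.sumPiEquivProdPi (fun _ : Fin q ⊕ Fin d => ℝ) with he
  have hmp : MeasurePreserving e.symm (γq.prod γd) gS :=
    measurePreserving_sumPiEquivProdPi_symm (fun _ : Fin q ⊕ Fin d => gaussianReal 0 1)
  have hesymm : ∀ (z : Fin q → ℝ) (w : Fin d → ℝ), e.symm (z, w) = Sum.elim z w := by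
    intro z w
    funext i
    cases i <;> rfl
  -- transfer between gS and the product measure
  have key : ∀ (A' : Matrix (Fin d) (Fin q) ℝ) (C' : Matrix (Fin d) (Fin d) ℝ),
      ∫ v, f (c + (Matrix.fromCols A' C').mulVec v) ∂gS
        = ∫ p : (Fin q → ℝ) × (Fin d → ℝ),
            f (c + A'.mulVec p.1 + C'.mulVec p.2) ∂(γq.prod γd) := by
    intro A' C'
    rw [← hmp.integral_comp e.symm.measurableEmbedding
      (fun v => f (c + (Matrix.fromCols A' C').mulVec v))]
    refine integral_congr_ae (Filter.Eventually.of_forall fun p => ?_)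
    obtain ⟨z, w⟩ := p
    simp only [hesymm, Matrix.fromCols_mulVec_sumElim, ← add_assoc]
  have hIprod : ∀ (A' : Matrix (Fin d) (Fin q) ℝ) (C' : Matrix (Fin d) (Fin d) ℝ),
      Integrable (fun p : (Fin q → ℝ) × (Fin d → ℝ) =>
        f (c + A'.mulVec p.1 + C'.mulVec p.2)) (γq.prod γd) := by
    intro A' C'
    have hγ := integrable_growth hfc hgrowth c (Matrix.fromCols A' C')
    have h3 := (hmp.integrable_comp_emb e.symm.measurableEmbedding).mpr hγ
    have h4 : ((fun v => f (c + (Matrix.fromCols A' C').mulVec v)) ∘ e.symm)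
        = fun p : (Fin q → ℝ) × (Fin d → ℝ) => f (c + A'.mulVec p.1 + C'.mulVec p.2) := by
      funext p
      obtain ⟨z, w⟩ := p
      simp only [Function.comp_apply]
      simp only [hesymm, Matrix.fromCols_mulVec_sumElim, ← add_assoc]
    rwa [h4] at h3
  -- Jensen's inequality pointwise in z
  have hJ : ∀ z : Fin q → ℝ, f (c + A₁.mulVec z)
      ≤ ∫ w, f (c + A₁.mulVec z + Cm.mulVec w) ∂γd := by
    intro z
    have hphi : Integrable (fun w : Fin d → ℝ => (c + A₁.mulVec z) + Cm.mulVec w) γd := by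
      refine (integrable_const _).add ?_
      have h5 := (LinearMap.toContinuousLinearMap (Matrix.toLin' Cm)).integrable_comp
        (integrable_id_pi (ι := Fin d))
      simpa [Matrix.toLin'_apply] using h5
    have hcomp : Integrable (fun w : Fin d → ℝ => f ((c + A₁.mulVec z) + Cm.mulVec w)) γd :=
      integrable_growth hfc hgrowth _ Cm
    have hjen := hf.map_integral_le (hfc.continuousOn) isClosed_univ
      (Filter.Eventually.of_forall fun w => Set.mem_univ _) hphi hcomp
    rw [integral_affine (c + A₁.mulVec z) Cm] at hjen
    calc f (c + A₁.mulVec z) ≤ ∫ w, f ((c + A₁.mulVec z) + Cm.mulVec w) ∂γd := hjen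
      _ = ∫ w, f (c + A₁.mulVec z + Cm.mulVec w) ∂γd := rfl
  -- the chain of (in)equalities
  have hint_eq : ∫ v, f (c + M₁.mulVec v) ∂gS = ∫ v, f (c + M₂.mulVec v) ∂gS := by
    have h1 : ∀ M : Matrix (Fin d) (Fin q ⊕ Fin d) ℝ,
        ∫ v, f (c + M.mulVec v) ∂gS = ∫ y, f (c + y) ∂(Measure.map M.mulVec gS) :=
      fun M => (integral_map (continuous_mulVec' M).measurable.aemeasurable
        ((hfc.comp (continuous_const.add continuous_id)).aestronglyMeasurable)).symm
    rw [h1 M₁, h1 M₂, map_mulVec_eq M₁ M₂ hM1M2]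
  have hfst : ∫ p : (Fin q → ℝ) × (Fin d → ℝ), f (c + B₁.mulVec p.1) ∂(γq.prod γd)
      = ∫ z, f (c + B₁.mulVec z) ∂γq := by
    have hint : Integrable (fun p : (Fin q → ℝ) × (Fin d → ℝ) =>
        f (c + B₁.mulVec p.1)) (γq.prod γd) := by
      have := hIprod B₁ 0
      simpa [Matrix.zero_mulVec] using this
    rw [integral_prod _ hint]
    simp
  calc ∫ ω, f (x + (h * κ) • (x - ζ) + s • A.mulVec (Z ω)) ∂P
      = ∫ z, f (c + A₁.mulVec z) ∂γq := by rw [hgoal A, ← hA₁, hZint A₁]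
    _ ≤ ∫ z, (∫ w, f (c + A₁.mulVec z + Cm.mulVec w) ∂γd) ∂γq :=
        integral_mono (integrable_growth hfc hgrowth c A₁)
          ((hIprod A₁ Cm).integral_prod_left) hJ
    _ = ∫ p : (Fin q → ℝ) × (Fin d → ℝ),
          f (c + A₁.mulVec p.1 + Cm.mulVec p.2) ∂(γq.prod γd) :=
        (integral_prod _ (hIprod A₁ Cm)).symm
    _ = ∫ v, f (c + M₁.mulVec v) ∂gS := (key A₁ Cm).symm
    _ = ∫ v, f (c + M₂.mulVec v) ∂gS := hint_eq
    _ = ∫ p : (Fin q → ℝ) × (Fin d → ℝ),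
          f (c + B₁.mulVec p.1 + (0 : Matrix (Fin d) (Fin d) ℝ).mulVec p.2) ∂(γq.prod γd) :=
        key B₁ 0
    _ = ∫ z, f (c + B₁.mulVec z) ∂γq := by
        rw [← hfst]
        refine integral_congr_ae (Filter.Eventually.of_forall fun p => ?_)
        simp only [Matrix.zero_mulVec, add_zero]
    _ = ∫ ω, f (x + (h * κ) • (x - ζ) + s • B.mulVec (Z ω)) ∂P := by
        rw [hgoal B, ← hB₁, hZint B₁]
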